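/- arXiv:1707.06845 — 2 statements merged into one kernel-verified Lean document; each statement's English description precedes it below -/
import Mathlib

section
/- Let X and Y be random variables on (Ω,𝓕,P) that are comonotone, i.e., (X(ω) − X(ω'))·(Y(ω) − Y(ω')) ≥ 0 for all ω, ω' ∈ Ω. Then F^←_{X+Y}(u) = F^←_X(u) + F^←_Y(u) for every u ∈ (0,1). -/
open MeasureTheory

/-- The distribution function `F_X(x) = P[X ≤ x]` of a random variable `X`. -/
noncomputable def distFun {Ω : Type*} [MeasurableSpace Ω] (P : Measure Ω) (X : Ω → ℝ) (x : ℝ) : ℝ :=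
  (P {ω | X ω ≤ x}).toReal

/-- The (lower) quantile function `F^←_X(u) = inf {x | F_X(x) ≥ u}`. -/
noncomputable def quantile {Ω : Type*} [MeasurableSpace Ω] (P : Measure Ω) (X : Ω → ℝ) (u : ℝ) : ℝ :=
  sInf {x : ℝ | u ≤ distFun P X x}

/-!
Comonotonicity makes the sublevel sets `{X ≤ x}` and `{Y ≤ y}` nested, so
`F_{X+Y}(x + y) ≥ min (F_X x) (F_Y y)`. Conversely, on `A = {X + Y ≤ s}` one has
`X ω + Y ω' ≤ s` for all `ω, ω' ∈ A`, so with `x = sup_A X` the set `A` lies in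
`{X ≤ x} ∩ {Y ≤ s - x}`. Hence, for `u ∈ (0,1)`, the set `{F_{X+Y} ≥ u}` is the Minkowski sum of
`{F_X ≥ u}` and `{F_Y ≥ u}`, and the infimum of a sum of nonempty sets bounded below is the sum
of their infima.
-/

open Set Filter ProbabilityTheory
open scoped Pointwise

def Comonotone {Ω : Type*} (X Y : Ω → ℝ) : Prop :=
  ∀ ω ω' : Ω, 0 ≤ (X ω - X ω') * (Y ω - Y ω')

namespace Comonotone

variable {Ω : Type*} {X Y : Ω → ℝ}

lemma le_of_lt (h : Comonotone X Y) {ω ω' : Ω} (hX : X ω < X ω') : Y ω ≤ Y ω' := by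
  nlinarith [h ω ω']

lemma setOf_le_subset_or (h : Comonotone X Y) (x y : ℝ) :
    {ω | X ω ≤ x} ⊆ {ω | Y ω ≤ y} ∨ {ω | Y ω ≤ y} ⊆ {ω | X ω ≤ x} := by
  by_contra! hne
  obtain ⟨⟨ω, hXω, hYω⟩, ⟨ω', hYω', hXω'⟩⟩ := And.imp not_subset.1 not_subset.1 hne
  simp only [mem_ofPred_eq, not_le] at hXω hYω hYω' hXω'
  linarith [h.le_of_lt (hXω.trans_lt hXω')]

lemma add_le_of_add_le (h : Comonotone X Y) {ω ω' : Ω} {s : ℝ}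
    (hω : X ω + Y ω ≤ s) (hω' : X ω' + Y ω' ≤ s) : X ω + Y ω' ≤ s := by
  rcases le_or_gt (X ω) (X ω') with hle | hlt
  · linarith
  · linarith [h.le_of_lt hlt]

end Comonotone

section DistFun

variable {Ω : Type*} [MeasurableSpace Ω] {P : Measure Ω} {X Y : Ω → ℝ} {u : ℝ}

lemma toReal_measure_le_distFun [IsFiniteMeasure P] {A : Set Ω} {x : ℝ}
    (hA : ∀ ω ∈ A, X ω ≤ x) : (P A).toReal ≤ distFun P X x :=
  ENNReal.toReal_mono (measure_ne_top _ _) (measure_mono hA)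

lemma monotone_distFun [IsFiniteMeasure P] : Monotone (distFun P X) := fun _ _ hxy =>
  toReal_measure_le_distFun fun _ hω => le_trans hω hxy

lemma distFun_eq_cdf_map [IsProbabilityMeasure P] (hX : AEMeasurable X P) :
    distFun P X = cdf (P.map X) := by
  have := Measure.isProbabilityMeasure_map (μ := P) hX
  ext x
  rw [cdf_eq_real, measureReal_def, Measure.map_apply_of_aemeasurable hX measurableSet_Iic]
  rfl

lemma nonempty_setOf_le_distFun [IsProbabilityMeasure P] (hX : AEMeasurable X P) (hu : u < 1) :
    {x | u ≤ distFun P X x}.Nonempty := by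
  rw [distFun_eq_cdf_map hX]
  exact ((tendsto_cdf_atTop _).eventually (eventually_ge_nhds hu)).exists

lemma bddBelow_setOf_le_distFun [IsProbabilityMeasure P] (hX : AEMeasurable X P) (hu : 0 < u) :
    BddBelow {x | u ≤ distFun P X x} := by
  obtain ⟨x₀, hx₀⟩ := ((tendsto_cdf_atBot (P.map X)).eventually (eventually_lt_nhds hu)).exists
  rw [← distFun_eq_cdf_map hX] at hx₀
  refine ⟨x₀, fun x hx => ?_⟩
  by_contra! hlt
  exact hx₀.not_ge (hx.trans (monotone_distFun hlt.le))

variable [IsFiniteMeasure P]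

lemma Comonotone.le_distFun_add_of_le_of_le (h : Comonotone X Y) {x y : ℝ}
    (hx : u ≤ distFun P X x) (hy : u ≤ distFun P Y y) :
    u ≤ distFun P (fun ω => X ω + Y ω) (x + y) := by
  rcases h.setOf_le_subset_or x y with hXY | hYX
  · exact hx.trans <| toReal_measure_le_distFun fun ω hω => add_le_add hω (hXY hω)
  · exact hy.trans <| toReal_measure_le_distFun fun ω hω => add_le_add (hYX hω) hω

lemma Comonotone.exists_le_distFun_of_le_distFun_add (h : Comonotone X Y) (hu : 0 < u) {s : ℝ}
    (hs : u ≤ distFun P (fun ω => X ω + Y ω) s) :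
    ∃ x, u ≤ distFun P X x ∧ u ≤ distFun P Y (s - x) := by
  set A := {ω | X ω + Y ω ≤ s}
  obtain ⟨ω₀, hω₀⟩ : A.Nonempty := by
    refine nonempty_iff_ne_empty.2 fun hA => hu.not_ge ?_
    rwa [distFun, show {ω | X ω + Y ω ≤ s} = ∅ from hA, measure_empty, ENNReal.toReal_zero] at hs
  have hbdd : BddAbove (X '' A) :=
    ⟨s - Y ω₀, forall_mem_image.2 fun ω hω => le_sub_iff_add_le.2 (h.add_le_of_add_le hω hω₀)⟩
  refine ⟨sSup (X '' A), hs.trans <| toReal_measure_le_distFun fun ω hω =>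
      le_csSup hbdd (mem_image_of_mem X hω),
    hs.trans <| toReal_measure_le_distFun fun ω hω => ?_⟩
  refine le_sub_comm.1 (csSup_le ⟨_, mem_image_of_mem X hω₀⟩ (forall_mem_image.2 fun ω' hω' => ?_))
  exact le_sub_iff_add_le.2 (h.add_le_of_add_le hω' hω)

lemma Comonotone.setOf_le_distFun_add (h : Comonotone X Y) (hu : 0 < u) :
    {s | u ≤ distFun P (fun ω => X ω + Y ω) s} =
      {x | u ≤ distFun P X x} + {y | u ≤ distFun P Y y} := by
  ext s
  refine ⟨fun hs => ?_, ?_⟩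
  · obtain ⟨x, hx, hy⟩ := h.exists_le_distFun_of_le_distFun_add hu hs
    exact ⟨x, hx, s - x, hy, add_sub_cancel x s⟩
  · rintro ⟨x, hx, y, hy, rfl⟩
    exact h.le_distFun_add_of_le_of_le hx hy

end DistFun

/-- If `X` and `Y` are comonotone random variables, then
`F^←_{X+Y}(u) = F^←_X(u) + F^←_Y(u)` for every `u ∈ (0,1)`. -/
theorem quantile_add_of_comonotone {Ω : Type*} [MeasurableSpace Ω] (P : Measure Ω)
    [IsProbabilityMeasure P] (X Y : Ω → ℝ) (hX : Measurable X) (hY : Measurable Y)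
    (hcom : ∀ ω ω' : Ω, 0 ≤ (X ω - X ω') * (Y ω - Y ω')) :
    ∀ u ∈ Set.Ioo (0:ℝ) 1,
      quantile P (fun ω => X ω + Y ω) u = quantile P X u + quantile P Y u := by
  rintro u ⟨hu₀, hu₁⟩
  rw [quantile, Comonotone.setOf_le_distFun_add hcom hu₀]
  exact csInf_add (nonempty_setOf_le_distFun hX.aemeasurable hu₁)
    (bddBelow_setOf_le_distFun hX.aemeasurable hu₀) (nonempty_setOf_le_distFun hY.aemeasurable hu₁)
    (bddBelow_setOf_le_distFun hY.aemeasurable hu₀)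
end

section
/- For every random variable X on (Ω,𝓕,P), ∫_{(0,1)} (F^←_X(u))^+ dQ(u) = ∫_{(0,∞)} (1 − D(F_X(x))) dλ(x), where λ is Lebesgue measure and (·)^+ denotes the positive part (both sides taking values in [0,∞]). -/
open MeasureTheory

/-- A distortion function: an increasing, right-continuous `D : [0,1] → [0,1]`
with `D 0 = 0` and `sup_{u ∈ (0,1)} D u = 1`. -/
structure IsDistortion (D : ℝ → ℝ) : Prop where
  mapsTo : ∀ u ∈ Set.Icc (0:ℝ) 1, D u ∈ Set.Icc (0:ℝ) 1
  mono : ∀ ⦃a b : ℝ⦄, 0 ≤ a → a ≤ b → b ≤ 1 → D a ≤ D b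
  rightCont : ∀ u ∈ Set.Ico (0:ℝ) 1, ContinuousWithinAt D (Set.Icc u 1) u
  zero : D 0 = 0
  sup_one : sSup (D '' Set.Ioo 0 1) = 1

/-- `Q` is the probability measure on the Borel sets of `(0,1)` corresponding to
the distortion function `D`, i.e. `Q (a,b] = D b - D a` for `0 < a ≤ b < 1`. -/
def IsCorresponding (D : ℝ → ℝ) (Q : Measure ℝ) : Prop :=
  IsProbabilityMeasure Q ∧ Q (Set.Ioo (0:ℝ) 1) = 1 ∧
    ∀ a b : ℝ, 0 < a → a ≤ b → b < 1 → Q (Set.Ioc a b) = ENNReal.ofReal (D b - D a)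

/-!
By the layer cake formula, `∫ (F^←)⁺ dQ = ∫_{(0,∞)} Q[F^← > t] dt`. Right-continuity of `F` makes
the quantile function its lower adjoint on `(0,1)`: `t < F^←(u) ↔ F(t) < u`. Hence
`Q[F^← > t] = Q((F(t), 1)) = 1 - D(F(t))`, the last step using `D(u) → 1` as `u → 1⁻`.
-/

open MeasureTheory ProbabilityTheory Set Filter Topology

theorem StieltjesFunction.lt_sInf_setOf_le_iff (f : StieltjesFunction ℝ) {u x : ℝ}
    (hlow : ∃ y, f y < u) (hup : ∃ y, u ≤ f y) :
    x < sInf {y | u ≤ f y} ↔ f x < u := by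
  obtain ⟨y₀, hy₀⟩ := hlow
  have hbdd : BddBelow {y | u ≤ f y} :=
    ⟨y₀, fun y hy => (f.mono.reflect_lt (hy₀.trans_le hy)).le⟩
  refine ⟨fun hx => not_le.1 fun hux => (csInf_le hbdd hux).not_gt hx, fun hx => ?_⟩
  obtain ⟨x', hxx', hx'⟩ : ∃ x' > x, f x' < u :=
    (((f.right_continuous x).mono Ioi_subset_Ici_self).eventually (gt_mem_nhds hx)
      |>.and self_mem_nhdsWithin).exists.imp fun _ h => ⟨h.2, h.1⟩
  exact hxx'.trans_le (le_csInf hup fun y hy => (f.mono.reflect_lt (hx'.trans_le hy)).le)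

section Quantile

variable {Ω : Type*} [MeasurableSpace Ω] {P : Measure Ω} [IsProbabilityMeasure P] {X : Ω → ℝ}

theorem distFun_eq_cdf (hX : AEMeasurable X P) : distFun P X = cdf (P.map X) := by
  have := Measure.isProbabilityMeasure_map (μ := P) hX
  funext x
  rw [cdf_eq_real, map_measureReal_apply_of_aemeasurable hX measurableSet_Iic]
  rfl

theorem distFun_mem_Icc (t : ℝ) : distFun P X t ∈ Icc 0 1 :=
  ⟨measureReal_nonneg, measureReal_le_one⟩

theorem lt_quantile_iff (hX : AEMeasurable X P) {u x : ℝ} (hu : u ∈ Ioo 0 1) :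
    x < quantile P X u ↔ distFun P X x < u := by
  have := Measure.isProbabilityMeasure_map (μ := P) hX
  rw [quantile, distFun_eq_cdf hX]
  exact (cdf _).lt_sInf_setOf_le_iff ((tendsto_cdf_atBot _).eventually (gt_mem_nhds hu.1)).exists
    (((tendsto_cdf_atTop _).eventually (lt_mem_nhds hu.2)).exists.imp fun _ => le_of_lt)

theorem monotoneOn_quantile (hX : AEMeasurable X P) : MonotoneOn (quantile P X) (Ioo 0 1) :=
  fun _ hu _ hv huv => le_of_forall_lt fun _ hx =>
    (lt_quantile_iff hX hv).2 (((lt_quantile_iff hX hu).1 hx).trans_le huv)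

theorem setOf_lt_quantile_inter_Ioo (hX : AEMeasurable X P) (t : ℝ) :
    {u | t < quantile P X u} ∩ Ioo 0 1 = Ioo (distFun P X t) 1 := by
  ext u
  simp only [mem_inter_iff, mem_ofPred_eq, mem_Ioo]
  constructor
  · rintro ⟨ht, hu⟩
    exact ⟨(lt_quantile_iff hX hu).1 ht, hu.2⟩
  · rintro ⟨htu, hu1⟩
    have hu : u ∈ Ioo 0 1 := ⟨(distFun_mem_Icc t).1.trans_lt htu, hu1⟩
    exact ⟨(lt_quantile_iff hX hu).2 htu, hu⟩

end Quantile

theorem measure_Ioo_eq_ofReal_of_tendsto {μ : Measure ℝ} {f : ℝ → ℝ} {a b l : ℝ} (hab : a < b)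
    (hμ : ∀ c ∈ Ioo a b, μ (Ioc a c) = ENNReal.ofReal (f c - f a))
    (hf : Tendsto f (𝓝[<] b) (𝓝 l)) :
    μ (Ioo a b) = ENNReal.ofReal (l - f a) := by
  obtain ⟨c, hc_mono, hc_mem, hc_lim⟩ := exists_seq_strictMono_tendsto' hab
  have hunion : ⋃ n, Ioc a (c n) = Ioo a b := by
    ext x
    simp only [mem_iUnion, mem_Ioc, mem_Ioo]
    constructor
    · rintro ⟨n, hax, hxc⟩
      exact ⟨hax, hxc.trans_lt (hc_mem n).2⟩
    · rintro ⟨hax, hxb⟩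
      obtain ⟨n, hn⟩ := (hc_lim.eventually (lt_mem_nhds hxb)).exists
      exact ⟨n, hax, hn.le⟩
  have hc_lim' : Tendsto c atTop (𝓝[<] b) :=
    tendsto_nhdsWithin_iff.2 ⟨hc_lim, .of_forall fun n => (hc_mem n).2⟩
  rw [← hunion]
  refine tendsto_nhds_unique (tendsto_measure_iUnion_atTop (antitone_const.Ioc hc_mono.monotone)) ?_
  refine ((ENNReal.continuous_ofReal.tendsto _).comp ((hf.comp hc_lim').sub_const (f a))).congr ?_
  exact fun n => (hμ _ (hc_mem n)).symm

namespace IsDistortion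

variable {D : ℝ → ℝ} (hD : IsDistortion D)
include hD

theorem tendsto_nhdsLT_one : Tendsto D (𝓝[<] 1) (𝓝 1) := by
  have hmono : MonotoneOn D (Ioo 0 1) := fun a ha b hb hab => hD.mono ha.1.le hab hb.2.le
  have hbdd : BddAbove (D '' Ioo 0 1) := by
    refine ⟨1, ?_⟩
    rintro _ ⟨u, hu, rfl⟩
    exact (hD.mapsTo u (Ioo_subset_Icc_self hu)).2
  simpa only [hD.sup_one] using hmono.tendsto_nhdsWithin_Ioo_left (nonempty_Ioo.2 zero_lt_one) hbdd

theorem map_one : D 1 = 1 :=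
  le_antisymm (hD.mapsTo 1 ⟨zero_le_one, le_rfl⟩).2 <|
    le_of_tendsto hD.tendsto_nhdsLT_one <|
      mem_of_superset (Ioo_mem_nhdsLT (zero_lt_one' ℝ)) fun _ hu => hD.mono hu.1.le hu.2.le le_rfl

end IsDistortion

theorem IsCorresponding.measure_Ioo_one {D : ℝ → ℝ} {Q : Measure ℝ} (hD : IsDistortion D)
    (hQ : IsCorresponding D Q) {a : ℝ} (ha : a ∈ Icc 0 1) :
    Q (Ioo a 1) = ENNReal.ofReal (1 - D a) := by
  obtain ⟨-, hQ01, hQIoc⟩ := hQ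
  rcases ha.1.eq_or_lt with rfl | ha0
  · rw [hQ01, hD.zero, sub_zero, ENNReal.ofReal_one]
  rcases ha.2.eq_or_lt with rfl | ha1
  · rw [Ioo_self, measure_empty, hD.map_one, sub_self, ENNReal.ofReal_zero]
  exact measure_Ioo_eq_ofReal_of_tendsto ha1 (fun c hc => hQIoc a c ha0 hc.1.le hc.2)
    hD.tendsto_nhdsLT_one

/-- `∫_{(0,1)} (F^←_X(u))⁺ dQ(u) = ∫_{(0,∞)} (1 - D(F_X(x))) dλ(x)` in `[0,∞]`. -/
theorem lintegral_quantile_pos_part {Ω : Type*} [MeasurableSpace Ω]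
    (P : Measure Ω) [IsProbabilityMeasure P] (D : ℝ → ℝ) (Q : Measure ℝ)
    (hD : IsDistortion D) (hQ : IsCorresponding D Q)
    (X : Ω → ℝ) (hX : Measurable X) :
    ∫⁻ u in Set.Ioo (0:ℝ) 1, ENNReal.ofReal (max (quantile P X u) 0) ∂Q
      = ∫⁻ x in Set.Ioi (0:ℝ), ENNReal.ofReal (1 - D (distFun P X x)) := by
  have hq : AEMeasurable (quantile P X) (Q.restrict (Ioo 0 1)) :=
    aemeasurable_restrict_of_monotoneOn measurableSet_Ioo (monotoneOn_quantile hX.aemeasurable)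
  rw [lintegral_eq_lintegral_meas_lt _ (ae_of_all _ fun u => le_max_right (quantile P X u) 0)
    (hq.max aemeasurable_const)]
  refine setLIntegral_congr_fun measurableSet_Ioi fun t (ht : 0 < t) => ?_
  have hpos : {u | t < max (quantile P X u) 0} = {u | t < quantile P X u} := by
    ext u
    simp only [mem_ofPred_eq, lt_max_iff, ht.not_gt, or_false]
  rw [Measure.restrict_apply' measurableSet_Ioo, hpos, setOf_lt_quantile_inter_Ioo hX.aemeasurable,
    hQ.measure_Ioo_one hD (distFun_mem_Icc t)]
end
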